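/- For every nonnegative integer n, sum over k from 0 to n of S(n,k) * k^2 equals b_{n+2} - 2*b_{n+1}, where b_m are the Bell numbers. -/
import Mathlib


/-- Stirling numbers of the second kind. -/
def S2 : ℕ → ℕ → ℕ
  | 0, 0 => 1
  | 0, _ + 1 => 0
  | _ + 1, 0 => 0
  | n + 1, k + 1 => (k + 1) * S2 n (k + 1) + S2 n k

/-- Bell numbers. -/
def bell (m : ℕ) : ℕ := ∑ k ∈ Finset.range (m + 1), S2 m k

lemma S2_eq_zero (n : ℕ) : ∀ k, n < k → S2 n k = 0 := by
  induction n with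
  | zero => intro k hk; cases k with
    | zero => omega
    | succ k => rfl
  | succ n ih =>
    intro k hk
    cases k with
    | zero => omega
    | succ k => simp [S2, ih k (by omega), ih (k+1) (by omega)]

lemma lemA (n : ℕ) :
    (∑ k ∈ Finset.range (n+1), S2 n k * k) + bell n = bell (n+1) := by
  unfold bell
  rw [Finset.sum_range_succ' (fun k => S2 (n+1) k) (n+1)]
  have h1 : ∀ k, S2 (n+1) (k+1) = (k+1) * S2 n (k+1) + S2 n k := fun k => rfl
  simp only [h1, S2, Finset.sum_add_distrib]
  have h2 : ∑ k ∈ Finset.range (n+2), S2 n k * k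
      = ∑ k ∈ Finset.range (n+1), (k+1) * S2 n (k+1) := by
    rw [Finset.sum_range_succ' (fun k => S2 n k * k) (n+1)]
    simp [mul_comm]
  have h3 : ∑ k ∈ Finset.range (n+2), S2 n k * k
      = ∑ k ∈ Finset.range (n+1), S2 n k * k := by
    rw [Finset.sum_range_succ, S2_eq_zero n (n+1) (by omega)]; ring
  omega

lemma lemQ (n : ℕ) :
    (∑ k ∈ Finset.range (n+1), S2 n k * k^2)
      + (∑ k ∈ Finset.range (n+1), S2 n k * k) + bell n
      = ∑ k ∈ Finset.range (n+2), S2 (n+1) k * k := by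
  rw [Finset.sum_range_succ' (fun k => S2 (n+1) k * k) (n+1)]
  have h1 : ∀ k : ℕ, S2 (n+1) (k+1) * (k+1)
      = S2 n (k+1) * (k+1)^2 + (S2 n k * k + S2 n k) := by
    intro k
    have : S2 (n+1) (k+1) = (k+1) * S2 n (k+1) + S2 n k := rfl
    rw [this]; ring
  simp only [h1, Finset.sum_add_distrib]
  have h2 : ∑ k ∈ Finset.range (n+2), S2 n k * k^2
      = ∑ k ∈ Finset.range (n+1), S2 n (k+1) * (k+1)^2 := by
    rw [Finset.sum_range_succ' (fun k => S2 n k * k^2) (n+1)]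
    simp
  have h3 : ∑ k ∈ Finset.range (n+2), S2 n k * k^2
      = ∑ k ∈ Finset.range (n+1), S2 n k * k^2 := by
    rw [Finset.sum_range_succ, S2_eq_zero n (n+1) (by omega)]; ring
  rw [← h2, h3]
  unfold bell
  simp [S2]
  omega

lemma key (n : ℕ) :
    (∑ k ∈ Finset.range (n+1), S2 n k * k^2) + 2 * bell (n+1) = bell (n+2) := by
  have hA := lemA n
  have hA1 : (∑ k ∈ Finset.range (n+2), S2 (n+1) k * k) + bell (n+1) = bell (n+2) := lemA (n+1)
  have hQ := lemQ n
  omega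

theorem stirling2_k_sq_sum_eq_bell (n : ℕ) :
    (∑ k ∈ Finset.range (n + 1), (S2 n k : ℤ) * (k : ℤ) ^ 2) =
      (bell (n + 2) : ℤ) - 2 * bell (n + 1) := by
  have h := key n
  have : ((∑ k ∈ Finset.range (n+1), S2 n k * k^2 : ℕ) : ℤ)
      = ∑ k ∈ Finset.range (n + 1), (S2 n k : ℤ) * (k : ℤ) ^ 2 := by push_cast; ring
  rw [← this]
  have := congrArg (fun x : ℕ => (x : ℤ)) h
  push_cast at this ⊢
  linarith
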